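/- Let n ≥ 1 and let Ω ⊆ EuclideanSpace ℝ (Fin n) be a bounded set that is star-shaped with respect to every point of Metric.ball 0 ρ (ρ > 0) and contained in Metric.ball 0 R. Let x and y be points of the frontier of Ω with ‖y‖ ≤ ‖x‖, let γ := Real.arcsin (ρ / ‖x‖), and let α := Real.arccos (⟪x, y⟫ / (‖x‖ * ‖y‖)) be the angle between x and y. If α ≤ π/2 - γ, then ‖y‖ ≥ (Real.sin γ / Real.sin (γ + α)) * ‖x‖. -/

import Mathlib

open scoped RealInnerProductSpace

/-!
Since `Ω` is star-shaped with respect to `ball 0 ρ` and `x ∈ closure Ω`, the cone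
`⋃ t < 1, ball (t • x) ((1 - t) * ρ)` with apex `x` lies in the interior of `Ω`, so the frontier
point `y` satisfies `(1 - t) * ρ ≤ ‖y - t • x‖` for all `t ∈ [0, 1]`. The angle hypothesis puts
the minimiser `t = (⟪x, y⟫ - ρ²) / (‖x‖² - ρ²)` of this quadratic constraint in `[0, 1]`, and
evaluating there gives `(⟪x, y⟫ - ρ²)² ≤ (‖x‖² - ρ²) (‖y‖² - ρ²)`. Expanding `sin (γ + α)`
turns the claim `ρ ≤ ‖y‖ sin (γ + α)` into an inequality between square roots that this bound
implies.
-/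

open Metric Real Set InnerProductGeometry

section StarShaped

variable {E : Type*} [NormedAddCommGroup E] [NormedSpace ℝ E] {Ω : Set E} {ρ t : ℝ} {x y : E}

theorem ball_smul_subset_of_forall_starConvex (hstar : ∀ z ∈ ball (0 : E) ρ, StarConvex ℝ z Ω)
    (hx : x ∈ Ω) (ht₀ : 0 ≤ t) (ht₁ : t < 1) : ball (t • x) ((1 - t) * ρ) ⊆ Ω := by
  intro p hp
  have h1t : 0 < 1 - t := sub_pos.2 ht₁
  set z := (1 - t)⁻¹ • (p - t • x)
  have hz : z ∈ ball (0 : E) ρ := by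
    rw [mem_ball_zero_iff, norm_smul, norm_inv, Real.norm_of_nonneg h1t.le, inv_mul_lt_iff₀ h1t]
    rwa [mem_ball, dist_eq_norm] at hp
  have hp_eq : (1 - t) • z + t • x = p := by
    rw [smul_inv_smul₀ h1t.ne', sub_add_cancel]
  simpa [hp_eq] using hstar z hz hx h1t.le ht₀ (sub_add_cancel 1 t)

theorem ball_smul_subset_interior_of_mem_closure
    (hstar : ∀ z ∈ ball (0 : E) ρ, StarConvex ℝ z Ω) (hx : x ∈ closure Ω) (ht₀ : 0 ≤ t)
    (ht₁ : t < 1) : ball (t • x) ((1 - t) * ρ) ⊆ interior Ω := by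
  refine interior_maximal (fun p hp ↦ ?_) isOpen_ball
  obtain ⟨x', hx'p, hx'Ω⟩ := mem_closure_iff.1 hx ((t • ·) ⁻¹' ball p ((1 - t) * ρ))
    (isOpen_ball.preimage (continuous_const_smul t)) (mem_ball_comm.1 hp)
  exact ball_smul_subset_of_forall_starConvex hstar hx'Ω ht₀ ht₁ (mem_ball_comm.1 hx'p)

theorem mul_le_norm_sub_smul_of_notMem_interior
    (hstar : ∀ z ∈ ball (0 : E) ρ, StarConvex ℝ z Ω) (hx : x ∈ closure Ω) (hy : y ∉ interior Ω)
    (ht₀ : 0 ≤ t) (ht₁ : t ≤ 1) : (1 - t) * ρ ≤ ‖y - t • x‖ := by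
  rcases ht₁.lt_or_eq with ht₁ | rfl
  · by_contra! h
    exact hy (ball_smul_subset_interior_of_mem_closure hstar hx ht₀ ht₁ (mem_ball_iff_norm.2 h))
  · simp

end StarShaped

theorem sq_le_mul_of_forall_mem_Icc_nonneg {A B C : ℝ} (hB : 0 ≤ B) (hBA : B ≤ A)
    (h : ∀ t ∈ Icc (0 : ℝ) 1, 0 ≤ A * t ^ 2 - 2 * B * t + C) : B ^ 2 ≤ A * C := by
  rcases (hB.trans hBA).eq_or_lt with hA | hA
  · obtain rfl : B = 0 := le_antisymm (hA ▸ hBA) hB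
    simp [← hA]
  · have hmin := h (B / A) ⟨div_nonneg hB hA.le, div_le_one_of_le₀ hBA hA.le⟩
    have hval : A * (A * (B / A) ^ 2 - 2 * B * (B / A) + C) = A * C - B ^ 2 := by
      field_simp
      ring
    nlinarith [mul_nonneg hA.le hmin]

theorem abs_mul_sub_le_sqrt_mul_sqrt {ρ s r P : ℝ} (hρs : ρ ^ 2 ≤ s ^ 2)
    (hdisc : (P - ρ ^ 2) ^ 2 ≤ (s ^ 2 - ρ ^ 2) * (r ^ 2 - ρ ^ 2)) :
    |ρ * (s ^ 2 - P)| ≤ √(s ^ 2 - ρ ^ 2) * √(s ^ 2 * r ^ 2 - P ^ 2) := by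
  rw [← Real.sqrt_mul (sub_nonneg.2 hρs)]
  refine Real.abs_le_sqrt ?_
  have hid : (s ^ 2 - ρ ^ 2) * (s ^ 2 * r ^ 2 - P ^ 2) - (ρ * (s ^ 2 - P)) ^ 2
      = s ^ 2 * ((s ^ 2 - ρ ^ 2) * (r ^ 2 - ρ ^ 2) - (P - ρ ^ 2) ^ 2) := by ring
  nlinarith [mul_nonneg (sq_nonneg s) (sub_nonneg.2 hdisc)]

section InnerProduct

variable {F : Type*} [NormedAddCommGroup F] [InnerProductSpace ℝ F] {x y : F} {ρ : ℝ}

theorem cos_mul_norm_mul_norm_le_inner_of_angle_le {β : ℝ} (hβ : β ≤ π) (h : angle x y ≤ β) :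
    cos β * (‖x‖ * ‖y‖) ≤ ⟪x, y⟫ :=
  cos_angle_mul_norm_mul_norm x y ▸ mul_le_mul_of_nonneg_right
    (cos_le_cos_of_nonneg_of_le_pi (angle_nonneg x y) hβ h) (by positivity)

theorem inner_sub_sq_sq_le_of_forall_mul_le_norm_sub_smul (hρ : 0 ≤ ρ) (hρxy : ρ ^ 2 ≤ ⟪x, y⟫)
    (hxy : ⟪x, y⟫ ≤ ‖x‖ ^ 2) (h : ∀ t ∈ Icc (0 : ℝ) 1, (1 - t) * ρ ≤ ‖y - t • x‖) :
    (⟪x, y⟫ - ρ ^ 2) ^ 2 ≤ (‖x‖ ^ 2 - ρ ^ 2) * (‖y‖ ^ 2 - ρ ^ 2) := by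
  refine sq_le_mul_of_forall_mem_Icc_nonneg (sub_nonneg.2 hρxy) (by linarith) fun t ht ↦ ?_
  have hsq := pow_le_pow_left₀ (mul_nonneg (sub_nonneg.2 ht.2) hρ) (h t ht) 2
  have hexp : ‖y - t • x‖ ^ 2 = ‖y‖ ^ 2 - 2 * t * ⟪x, y⟫ + t ^ 2 * ‖x‖ ^ 2 := by
    rw [norm_sub_sq_real, real_inner_smul_right, real_inner_comm, norm_smul, Real.norm_eq_abs,
      mul_pow, sq_abs]
    ring
  nlinarith

theorem norm_mul_sin_arcsin_add_angle (hx : x ≠ 0) (hρ : |ρ| ≤ ‖x‖) :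
    ‖x‖ ^ 2 * (‖y‖ * sin (arcsin (ρ / ‖x‖) + angle x y))
      = ρ * ⟪x, y⟫ + √(‖x‖ ^ 2 - ρ ^ 2) * √(‖x‖ ^ 2 * ‖y‖ ^ 2 - ⟪x, y⟫ ^ 2) := by
  have hx0 : 0 < ‖x‖ := norm_pos_iff.2 hx
  have hsin : sin (arcsin (ρ / ‖x‖)) * ‖x‖ = ρ := by
    rw [sin_arcsin (by rw [le_div_iff₀ hx0]; linarith [neg_abs_le ρ])
      (by rw [div_le_one hx0]; linarith [le_abs_self ρ])]
    field_simp
  have hcos : cos (arcsin (ρ / ‖x‖)) * ‖x‖ = √(‖x‖ ^ 2 - ρ ^ 2) := by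
    have hsq : ‖x‖ ^ 2 - ρ ^ 2 = (1 - (ρ / ‖x‖) ^ 2) * ‖x‖ ^ 2 := by field_simp
    rw [cos_arcsin, hsq, Real.sqrt_mul' _ (sq_nonneg _), Real.sqrt_sq hx0.le]
  have hsinα := sin_angle_mul_norm_mul_norm x y
  rw [real_inner_self_eq_norm_sq, real_inner_self_eq_norm_sq, ← sq] at hsinα
  rw [sin_add, ← hcos, ← hsinα, ← cos_angle_mul_norm_mul_norm x y]
  linear_combination (cos (angle x y) * ‖x‖ * ‖y‖) * hsin

theorem le_norm_mul_sin_arcsin_add_angle (hx : x ≠ 0) (hρ : |ρ| ≤ ‖x‖)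
    (hdisc : (⟪x, y⟫ - ρ ^ 2) ^ 2 ≤ (‖x‖ ^ 2 - ρ ^ 2) * (‖y‖ ^ 2 - ρ ^ 2)) :
    ρ ≤ ‖y‖ * sin (arcsin (ρ / ‖x‖) + angle x y) := by
  have hx0 : 0 < ‖x‖ := norm_pos_iff.2 hx
  have hρx : ρ ^ 2 ≤ ‖x‖ ^ 2 := sq_le_sq.2 (by rwa [abs_norm])
  have h := (le_abs_self _).trans (abs_mul_sub_le_sqrt_mul_sqrt hρx hdisc)
  refine le_of_mul_le_mul_left ?_ (pow_pos hx0 2)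
  rw [norm_mul_sin_arcsin_add_angle hx hρ]
  linarith

end InnerProduct

theorem geometric_auxiliary_lower_bound_general
    (n : ℕ) (Ω : Set (EuclideanSpace ℝ (Fin n)))
    (ρ : ℝ) (hρ : 0 < ρ)
    (hstar : ∀ z ∈ Metric.ball (0 : EuclideanSpace ℝ (Fin n)) ρ, StarConvex ℝ z Ω)
    (x y : EuclideanSpace ℝ (Fin n)) (hx : x ∈ frontier Ω) (hy : y ∈ frontier Ω)
    (hρx : ρ ≤ ‖x‖) (hyx : ‖y‖ ≤ ‖x‖)
    (hα : Real.arccos (⟪x, y⟫ / (‖x‖ * ‖y‖)) ≤ Real.pi / 2 - Real.arcsin (ρ / ‖x‖)) :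
    (Real.sin (Real.arcsin (ρ / ‖x‖)) /
        Real.sin (Real.arcsin (ρ / ‖x‖) + Real.arccos (⟪x, y⟫ / (‖x‖ * ‖y‖)))) * ‖x‖
      ≤ ‖y‖ := by
  change angle x y ≤ _ at hα
  change sin (arcsin (ρ / ‖x‖)) / sin (arcsin (ρ / ‖x‖) + angle x y) * ‖x‖ ≤ ‖y‖
  have hx0 : 0 < ‖x‖ := hρ.trans_le hρx
  have hcone : ∀ t ∈ Icc (0 : ℝ) 1, (1 - t) * ρ ≤ ‖y - t • x‖ := fun t ht ↦
    mul_le_norm_sub_smul_of_notMem_interior hstar (frontier_subset_closure hx) hy.2 ht.1 ht.2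
  have hρy : ρ ≤ ‖y‖ := by simpa using hcone 0 (left_mem_Icc.2 zero_le_one)
  have hγ : 0 < arcsin (ρ / ‖x‖) := arcsin_pos.2 (div_pos hρ hx0)
  have hsinγ : sin (arcsin (ρ / ‖x‖)) = ρ / ‖x‖ :=
    sin_arcsin (by linarith [div_pos hρ hx0]) (div_le_one_of_le₀ hρx hx0.le)
  have hinner : ρ * ‖y‖ ≤ ⟪x, y⟫ := by
    have := cos_mul_norm_mul_norm_le_inner_of_angle_le (by linarith [pi_pos]) hα
    rw [cos_pi_div_two_sub, hsinγ] at this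
    calc ρ * ‖y‖ = ρ / ‖x‖ * (‖x‖ * ‖y‖) := by field_simp
      _ ≤ ⟪x, y⟫ := this
  have hdisc := inner_sub_sq_sq_le_of_forall_mul_le_norm_sub_smul hρ.le (by nlinarith)
    ((real_inner_le_norm x y).trans (by nlinarith)) hcone
  have hsin : 0 < sin (arcsin (ρ / ‖x‖) + angle x y) :=
    sin_pos_of_pos_of_lt_pi (by linarith [angle_nonneg x y]) (by linarith [pi_pos])
  rw [hsinγ, div_right_comm, div_mul_cancel₀ _ hx0.ne', div_le_iff₀ hsin]
  exact le_norm_mul_sin_arcsin_add_angle (norm_pos_iff.1 hx0) (by rwa [abs_of_pos hρ]) hdisc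

/-- Lemma 4 (`lemma:geometricauxiliary`): for a bounded set `Ω ⊆ ball 0 R` star-shaped
with respect to `ball 0 ρ`, boundary points `x, y` with `‖y‖ ≤ ‖x‖`, angle
`α ≤ π/2 - γ` where `γ = arcsin (ρ/‖x‖)`, satisfy
`‖y‖ ≥ (sin γ / sin (γ + α)) * ‖x‖`. -/
theorem geometric_auxiliary_lower_bound
    (n : ℕ) (hn : 1 ≤ n) (Ω : Set (EuclideanSpace ℝ (Fin n)))
    (hbdd : Bornology.IsBounded Ω)
    (R ρ : ℝ) (hρ : 0 < ρ)
    (hΩR : Ω ⊆ Metric.ball (0 : EuclideanSpace ℝ (Fin n)) R)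
    (hstar : ∀ z ∈ Metric.ball (0 : EuclideanSpace ℝ (Fin n)) ρ, StarConvex ℝ z Ω)
    (x y : EuclideanSpace ℝ (Fin n)) (hx : x ∈ frontier Ω) (hy : y ∈ frontier Ω)
    (hρx : ρ ≤ ‖x‖) (hyx : ‖y‖ ≤ ‖x‖)
    (hα : Real.arccos (⟪x, y⟫ / (‖x‖ * ‖y‖)) ≤ Real.pi / 2 - Real.arcsin (ρ / ‖x‖)) :
    (Real.sin (Real.arcsin (ρ / ‖x‖)) /
        Real.sin (Real.arcsin (ρ / ‖x‖) + Real.arccos (⟪x, y⟫ / (‖x‖ * ‖y‖)))) * ‖x‖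
      ≤ ‖y‖ :=
  geometric_auxiliary_lower_bound_general n Ω ρ hρ hstar x y hx hy hρx hyx hα
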